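/- arXiv:2009.07760 — 2 statements merged into one kernel-verified Lean document; each statement's English description precedes it below -/
import Mathlib

section
/- Let A be a commutative Hopf algebra over ℂ, J a Hopf 2-cocycle for A, and B ⊆ A a Hopf subalgebra with augmentation ideal B⁺ := B ∩ ker ε. Suppose a, b ∈ A satisfy Δ(a) − a⊗1 − 1⊗a ∈ B⁺ ⊗ B⁺ and Δ(b) − b⊗1 − 1⊗b ∈ B⁺ ⊗ B⁺. Then the commutator [a,b] := _J m_J(a⊗b) − _J m_J(b⊗a) in the twisted Hopf algebra _J A_J lies in B⁺. -/
/-!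
Write `E = id - η ∘ ε` and `x ≡ y` for `x - y ∈ B`. A normalized form satisfies
`f = ε ⊗ ε + f ∘ (E ⊗ E)`, hence `Σ f(a₁,b₁) g(a₂,b₂) = g(a ⊗ b) + Σ f(Ea₁,Eb₁) g(a₂,b₂)`.
The hypothesis on `a` makes `(E ⊗ id) Δa = a ⊗ 1 + (element of B⁺ ⊗ B⁺)` lie in `A ⊗ B`, so the
error term lies in `B` as soon as `g` maps `B ⊗ B` into `B`. Now
`_J m_J (a ⊗ b) = Σ J⁻¹(a₁,b₁) m_J(a₂ ⊗ b₂)` where `m_J(a ⊗ b) = Σ a₁b₁ J(a₂,b₂)` maps `B ⊗ B`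
into `B` because `B` is a subbialgebra; applying the above twice (once with the tensor legs
exchanged) gives `_J m_J (a ⊗ b) ≡ ab`, and commutativity of `A` puts the commutator in `B`.
Finally `ε ∘ _J m_J = J⁻¹ * J = ε ⊗ ε` vanishes on `a ⊗ b - b ⊗ a`.
-/

open TensorProduct LinearMap

noncomputable section

/-- Convolution product of linear forms on a coalgebra `C` over `ℂ`:
`(F * G)(x) = Σ F(x₁) G(x₂)`. -/
def conv {C : Type} [AddCommGroup C] [Module ℂ C] [Coalgebra ℂ C]
    (F G : C →ₗ[ℂ] ℂ) : C →ₗ[ℂ] ℂ :=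
  LinearMap.mul' ℂ ℂ ∘ₗ TensorProduct.map F G ∘ₗ Coalgebra.comul

/-- The left-hand side `Σ J(a₁b₁, c) J(a₂, b₂)` of the Hopf 2-cocycle identity,
as a linear form on `(A ⊗ A) ⊗ A`. -/
def cocycleL {A : Type} [Ring A] [Bialgebra ℂ A] (J : A ⊗[ℂ] A →ₗ[ℂ] ℂ) :
    ((A ⊗[ℂ] A) ⊗[ℂ] A) →ₗ[ℂ] ℂ :=
  conv (J ∘ₗ TensorProduct.map (LinearMap.mul' ℂ A) LinearMap.id)
    (LinearMap.mul' ℂ ℂ ∘ₗ TensorProduct.map J Coalgebra.counit)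

/-- The right-hand side `Σ J(a, b₁c₁) J(b₂, c₂)` of the Hopf 2-cocycle identity,
as a linear form on `(A ⊗ A) ⊗ A`. -/
def cocycleR {A : Type} [Ring A] [Bialgebra ℂ A] (J : A ⊗[ℂ] A →ₗ[ℂ] ℂ) :
    ((A ⊗[ℂ] A) ⊗[ℂ] A) →ₗ[ℂ] ℂ :=
  conv (J ∘ₗ LinearMap.lTensor A (LinearMap.mul' ℂ A) ∘ₗ
      (TensorProduct.assoc ℂ A A A).toLinearMap)
    (LinearMap.mul' ℂ ℂ ∘ₗ TensorProduct.map Coalgebra.counit J ∘ₗ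
      (TensorProduct.assoc ℂ A A A).toLinearMap)

/-- `J` is a Hopf 2-cocycle for `A` with convolution inverse `Jinv`:
`J * Jinv = Jinv * J = ε ⊗ ε`, the 2-cocycle identity
`Σ J(a₁b₁, c)J(a₂, b₂) = Σ J(a, b₁c₁)J(b₂, c₂)` holds, and `J(a,1) = ε(a) = J(1,a)`. -/
def IsHopf2Cocycle {A : Type} [Ring A] [Bialgebra ℂ A]
    (J Jinv : A ⊗[ℂ] A →ₗ[ℂ] ℂ) : Prop :=
  conv J Jinv = Coalgebra.counit ∧ conv Jinv J = Coalgebra.counit ∧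
  cocycleL J = cocycleR J ∧
  ∀ a : A, J (a ⊗ₜ[ℂ] 1) = Coalgebra.counit (R := ℂ) a ∧
    J ((1 : A) ⊗ₜ[ℂ] a) = Coalgebra.counit (R := ℂ) a

/-- The two-sided twisted multiplication
`_K m_J (a ⊗ b) = Σ Kinv(a₁,b₁) a₂b₂ J(a₃,b₃)`, where `Kinv` plays the role of the
convolution inverse of the left cocycle `K`. -/
def twistMul {A : Type} [Ring A] [Bialgebra ℂ A] (Kinv J : A ⊗[ℂ] A →ₗ[ℂ] ℂ) :
    A ⊗[ℂ] A →ₗ[ℂ] A :=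
  (TensorProduct.lid ℂ A).toLinearMap
    ∘ₗ LinearMap.lTensor ℂ (TensorProduct.rid ℂ A).toLinearMap
    ∘ₗ TensorProduct.map Kinv (TensorProduct.map (LinearMap.mul' ℂ A) J)
    ∘ₗ LinearMap.lTensor (A ⊗[ℂ] A) Coalgebra.comul
    ∘ₗ Coalgebra.comul

/-- The one-sided twisted multiplication `_K m (a ⊗ b) = Σ Kinv(a₁,b₁) a₂b₂`. -/
def mulLeftTwist {A : Type} [Ring A] [Bialgebra ℂ A] (Kinv : A ⊗[ℂ] A →ₗ[ℂ] ℂ) :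
    A ⊗[ℂ] A →ₗ[ℂ] A :=
  (TensorProduct.lid ℂ A).toLinearMap
    ∘ₗ TensorProduct.map Kinv (LinearMap.mul' ℂ A) ∘ₗ Coalgebra.comul

/-- The one-sided twisted multiplication `m_J (a ⊗ b) = Σ a₁b₁ J(a₂,b₂)`. -/
def mulRightTwist {A : Type} [Ring A] [Bialgebra ℂ A] (J : A ⊗[ℂ] A →ₗ[ℂ] ℂ) :
    A ⊗[ℂ] A →ₗ[ℂ] A :=
  (TensorProduct.rid ℂ A).toLinearMap
    ∘ₗ TensorProduct.map (LinearMap.mul' ℂ A) J ∘ₗ Coalgebra.comul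

/-- `p` is a primitive element: `Δ(p) = p⊗1 + 1⊗p`. -/
def IsPrimitive {A : Type} [Ring A] [Bialgebra ℂ A] (p : A) : Prop :=
  Coalgebra.comul (R := ℂ) p = p ⊗ₜ[ℂ] (1 : A) + (1 : A) ⊗ₜ[ℂ] p

/-- `x` is a grouplike element: `Δ(x) = x⊗x` and `ε(x) = 1`. -/
def IsGrouplike {A : Type} [Ring A] [Bialgebra ℂ A] (x : A) : Prop :=
  Coalgebra.comul (R := ℂ) x = x ⊗ₜ[ℂ] x ∧ Coalgebra.counit (R := ℂ) x = 1

open Coalgebra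

section TensorMembership

variable {R M N P Q X : Type*} [CommRing R]
  [AddCommGroup M] [Module R M] [AddCommGroup N] [Module R N]
  [AddCommGroup P] [Module R P] [AddCommGroup Q] [Module R Q]
  [AddCommGroup X] [Module R X]

theorem mem_of_forall_tmul_tmul_mem (Φ : (M ⊗[R] N) ⊗[R] (P ⊗[R] Q) →ₗ[R] X)
    {V : Submodule R X} (h : ∀ m n p q, Φ ((m ⊗ₜ n) ⊗ₜ (p ⊗ₜ q)) ∈ V) (w) : Φ w ∈ V := by
  have hΦ : V.mkQ ∘ₗ Φ = 0 :=
    TensorProduct.ext_fourfold' fun m n p q ↦ (V.mkQ_apply _).trans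
      ((Submodule.Quotient.mk_eq_zero V).2 (h m n p q))
  exact (Submodule.Quotient.mk_eq_zero V).1 (LinearMap.congr_fun hΦ w)

end TensorMembership

theorem Subalgebra.mul'_mapIncl_mem {R A : Type*} [CommRing R] [Ring A] [Algebra R A]
    (B : Subalgebra R A) (w : B.toSubmodule ⊗[R] B.toSubmodule) :
    mul' R A (mapIncl B.toSubmodule B.toSubmodule w) ∈ B.toSubmodule := by
  induction w using TensorProduct.induction_on with
  | zero => simp
  | tmul x y => simpa using B.mul_mem x.2 y.2
  | add x y hx hy => simpa using add_mem hx hy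

section Coalgebra

variable {R C M : Type*} [CommRing R] [AddCommGroup C] [Module R C] [Coalgebra R C]
  [AddCommGroup M] [Module R M]

theorem lid_map_counit_comul (g : C →ₗ[R] M) (x : C) :
    TensorProduct.lid R M (map counit g (comul x)) = g x := by
  rw [← lTensor_comp_rTensor, comp_apply, rTensor_counit_comul]
  simp

theorem rid_map_counit_comul (g : C →ₗ[R] M) (x : C) :
    TensorProduct.rid R M (map g counit (comul x)) = g x := by
  rw [← rTensor_comp_lTensor, comp_apply, lTensor_counit_comul]
  simp

end Coalgebra

section Bialgebra

variable {R A : Type*} [CommRing R] [Ring A] [Bialgebra R A]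

variable (R A) in
def augmentationProj : A →ₗ[R] A :=
  LinearMap.id - Algebra.linearMap R A ∘ₗ counit

theorem augmentationProj_apply (x : A) :
    augmentationProj R A x = x - algebraMap R A (counit x) := rfl

theorem rTensor_augmentationProj_comul (a : A) :
    rTensor A (augmentationProj R A) (comul a) = comul a - 1 ⊗ₜ a := by
  rw [augmentationProj, rTensor_sub, rTensor_comp, LinearMap.sub_apply, comp_apply,
    rTensor_counit_comul]
  simp [Algebra.algebraMap_eq_smul_one]

theorem lTensor_augmentationProj_comul (a : A) :
    lTensor A (augmentationProj R A) (comul a) = comul a - a ⊗ₜ 1 := by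
  rw [augmentationProj, lTensor_sub, lTensor_comp, LinearMap.sub_apply, comp_apply,
    lTensor_counit_comul]
  simp [Algebra.algebraMap_eq_smul_one]

def IsNormalized (f : A ⊗[R] A →ₗ[R] R) : Prop :=
  ∀ x : A, f (x ⊗ₜ 1) = counit x ∧ f (1 ⊗ₜ x) = counit x

variable {f : A ⊗[R] A →ₗ[R] R}

theorem eq_counit_add_comp_map_augmentationProj (hf : IsNormalized f) :
    f = counit + f ∘ₗ map (augmentationProj R A) (augmentationProj R A) := by
  refine TensorProduct.ext' fun x y ↦ ?_
  simp only [LinearMap.add_apply, comp_apply, map_tmul, augmentationProj_apply,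
    Algebra.algebraMap_eq_smul_one, sub_tmul, tmul_sub, ← smul_tmul', tmul_smul, map_sub,
    map_smul, (hf x).1, (hf y).2, (hf 1).1, counit_tmul, Bialgebra.counit_one, smul_eq_mul]
  ring

variable {V : Submodule R A} {g : A ⊗[R] A →ₗ[R] A}

theorem comul_sub_one_tmul_mem_range_lTensor (h1 : (1 : A) ∈ V) {a : A}
    (ha : comul a - a ⊗ₜ 1 - 1 ⊗ₜ a ∈ range (mapIncl V V)) :
    comul a - 1 ⊗ₜ a ∈ range (lTensor A V.subtype) := by
  have hle : range (mapIncl V V) ≤ range (lTensor A V.subtype) :=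
    range_map_mono (by simp) le_rfl
  convert add_mem (hle ha) ⟨a ⊗ₜ ⟨1, h1⟩, rfl⟩ using 1
  simp only [lTensor_tmul, Submodule.subtype_apply]
  abel

theorem comul_sub_tmul_one_mem_range_rTensor (h1 : (1 : A) ∈ V) {a : A}
    (ha : comul a - a ⊗ₜ 1 - 1 ⊗ₜ a ∈ range (mapIncl V V)) :
    comul a - a ⊗ₜ 1 ∈ range (rTensor A V.subtype) := by
  have hle : range (mapIncl V V) ≤ range (rTensor A V.subtype) :=
    range_map_mono le_rfl (by simp)
  convert add_mem (hle ha) ⟨⟨1, h1⟩ ⊗ₜ a, rfl⟩ using 1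
  simp only [rTensor_tmul, Submodule.subtype_apply]
  abel

theorem lid_map_comul_tmul_sub_mem
    (hf : IsNormalized f) (hg : ∀ w, g (mapIncl V V w) ∈ V) {a b : A}
    (ha : comul a - 1 ⊗ₜ a ∈ range (lTensor A V.subtype))
    (hb : comul b - 1 ⊗ₜ b ∈ range (lTensor A V.subtype)) :
    TensorProduct.lid R A (map f g (comul (a ⊗ₜ b))) - g (a ⊗ₜ b) ∈ V := by
  obtain ⟨u, hu⟩ := ha
  obtain ⟨v, hv⟩ := hb
  rw [← rTensor_augmentationProj_comul] at hu hv
  have hsplit : map f g (comul (a ⊗ₜ b)) = map counit g (comul (a ⊗ₜ b)) +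
      map f g (tensorTensorTensorComm R A A A A
        (lTensor A V.subtype u ⊗ₜ lTensor A V.subtype v)) := by
    conv_lhs => rw [eq_counit_add_comp_map_augmentationProj hf, map_add_left, LinearMap.add_apply]
    rw [hu, hv, comul_tmul, AlgebraTensorModule.tensorTensorTensorComm_eq]
    have hcomm : map (f ∘ₗ map (augmentationProj R A) (augmentationProj R A)) g ∘ₗ
        (tensorTensorTensorComm R A A A A).toLinearMap =
        map f g ∘ₗ (tensorTensorTensorComm R A A A A).toLinearMap ∘ₗ
          map (rTensor A (augmentationProj R A)) (rTensor A (augmentationProj R A)) :=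
      TensorProduct.ext_fourfold' fun _ _ _ _ ↦ rfl
    exact congrArg _ (LinearMap.congr_fun hcomm (comul a ⊗ₜ comul b))
  have hrest : TensorProduct.lid R A (map f g (tensorTensorTensorComm R A A A A
      (lTensor A V.subtype u ⊗ₜ lTensor A V.subtype v))) ∈ V :=
    mem_of_forall_tmul_tmul_mem (V := V) (TensorProduct.lid R A ∘ₗ map f g ∘ₗ
        (tensorTensorTensorComm R A A A A).toLinearMap ∘ₗ
        map (lTensor A V.subtype) (lTensor A V.subtype))
      (fun x p y q ↦ by simpa using V.smul_mem (f (x ⊗ₜ y)) (hg (p ⊗ₜ q))) (u ⊗ₜ v)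
  rwa [hsplit, map_add, lid_map_counit_comul, add_sub_cancel_left]


theorem rid_map_comul_tmul_sub_mem
    (hf : IsNormalized f) (hg : ∀ w, g (mapIncl V V w) ∈ V) {a b : A}
    (ha : comul a - a ⊗ₜ 1 ∈ range (rTensor A V.subtype))
    (hb : comul b - b ⊗ₜ 1 ∈ range (rTensor A V.subtype)) :
    TensorProduct.rid R A (map g f (comul (a ⊗ₜ b))) - g (a ⊗ₜ b) ∈ V := by
  obtain ⟨u, hu⟩ := ha
  obtain ⟨v, hv⟩ := hb
  rw [← lTensor_augmentationProj_comul] at hu hv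
  have hsplit : map g f (comul (a ⊗ₜ b)) = map g counit (comul (a ⊗ₜ b)) +
      map g f (tensorTensorTensorComm R A A A A
        (rTensor A V.subtype u ⊗ₜ rTensor A V.subtype v)) := by
    conv_lhs => rw [eq_counit_add_comp_map_augmentationProj hf, map_add_right, LinearMap.add_apply]
    rw [hu, hv, comul_tmul, AlgebraTensorModule.tensorTensorTensorComm_eq]
    have hcomm : map g (f ∘ₗ map (augmentationProj R A) (augmentationProj R A)) ∘ₗ
        (tensorTensorTensorComm R A A A A).toLinearMap =
        map g f ∘ₗ (tensorTensorTensorComm R A A A A).toLinearMap ∘ₗ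
          map (lTensor A (augmentationProj R A)) (lTensor A (augmentationProj R A)) :=
      TensorProduct.ext_fourfold' fun _ _ _ _ ↦ rfl
    exact congrArg _ (LinearMap.congr_fun hcomm (comul a ⊗ₜ comul b))
  have hrest : TensorProduct.rid R A (map g f (tensorTensorTensorComm R A A A A
      (rTensor A V.subtype u ⊗ₜ rTensor A V.subtype v))) ∈ V :=
    mem_of_forall_tmul_tmul_mem (V := V) (TensorProduct.rid R A ∘ₗ map g f ∘ₗ
        (tensorTensorTensorComm R A A A A).toLinearMap ∘ₗ
        map (rTensor A V.subtype) (rTensor A V.subtype))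
      (fun p x q y ↦ by simpa using V.smul_mem (f (x ⊗ₜ y)) (hg (p ⊗ₜ q))) (u ⊗ₜ v)
  rwa [hsplit, map_add, rid_map_counit_comul, add_sub_cancel_left]

end Bialgebra

section Twist

variable {A : Type} [Ring A] [Bialgebra ℂ A]

theorem twistMul_eq_lid_comp_map_mulRightTwist (K L : A ⊗[ℂ] A →ₗ[ℂ] ℂ) :
    twistMul K L =
      (TensorProduct.lid ℂ A).toLinearMap ∘ₗ map K (mulRightTwist L) ∘ₗ comul := by
  have h : map K (mulRightTwist L) = lTensor ℂ (TensorProduct.rid ℂ A).toLinearMap ∘ₗ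
      map K (map (mul' ℂ A) L) ∘ₗ lTensor (A ⊗[ℂ] A) comul :=
    TensorProduct.ext' fun _ _ ↦ rfl
  rw [h]
  rfl

theorem counit_comp_mulRightTwist (L : A ⊗[ℂ] A →ₗ[ℂ] ℂ) :
    counit ∘ₗ mulRightTwist L = L := by
  have h : counit ∘ₗ (TensorProduct.rid ℂ A).toLinearMap ∘ₗ map (mul' ℂ A) L =
      (TensorProduct.lid ℂ ℂ).toLinearMap ∘ₗ map counit L :=
    TensorProduct.ext_fourfold' fun _ _ _ _ ↦ by simp [Bialgebra.counit_mul, mul_comm]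
  exact LinearMap.ext fun w ↦ (LinearMap.congr_fun h (comul w)).trans (lid_map_counit_comul L w)

theorem counit_twistMul (K L : A ⊗[ℂ] A →ₗ[ℂ] ℂ) (w : A ⊗[ℂ] A) :
    counit (twistMul K L w) = conv K L w := by
  have h : counit ∘ₗ (TensorProduct.lid ℂ A).toLinearMap ∘ₗ map K (mulRightTwist L) =
      mul' ℂ ℂ ∘ₗ map K (counit ∘ₗ mulRightTwist L) :=
    TensorProduct.ext' fun _ _ ↦ by simp
  rw [counit_comp_mulRightTwist] at h
  rw [twistMul_eq_lid_comp_map_mulRightTwist]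
  exact LinearMap.congr_fun h (comul w)

theorem conv_tmul_one {F G : A ⊗[ℂ] A →ₗ[ℂ] ℂ} (hG : ∀ x : A, G (x ⊗ₜ 1) = counit x)
    (x : A) : conv F G (x ⊗ₜ 1) = F (x ⊗ₜ 1) := by
  rw [conv, comp_apply, comp_apply, comul_tmul, Bialgebra.comul_one,
    Algebra.TensorProduct.one_def]
  refine Eq.trans ?_ (rid_map_counit_comul (F ∘ₗ (mk ℂ A A).flip 1) x)
  induction comul (R := ℂ) x using TensorProduct.induction_on with
  | zero => simp
  | tmul p q => simp [hG, mul_comm]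
  | add X Y hX hY => simp_all [add_tmul]

theorem conv_one_tmul {F G : A ⊗[ℂ] A →ₗ[ℂ] ℂ} (hG : ∀ x : A, G (1 ⊗ₜ x) = counit x)
    (x : A) : conv F G (1 ⊗ₜ x) = F (1 ⊗ₜ x) := by
  rw [conv, comp_apply, comp_apply, comul_tmul, Bialgebra.comul_one,
    Algebra.TensorProduct.one_def]
  refine Eq.trans ?_ (rid_map_counit_comul (F ∘ₗ mk ℂ A A 1) x)
  induction comul (R := ℂ) x using TensorProduct.induction_on with
  | zero => simp
  | tmul p q => simp [hG, mul_comm]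
  | add X Y hX hY => simp_all [tmul_add]

theorem isNormalized_of_conv_eq_counit {J Jinv : A ⊗[ℂ] A →ₗ[ℂ] ℂ} (hJ : IsNormalized J)
    (hconv : conv Jinv J = counit) : IsNormalized Jinv := fun x ↦ by
  constructor
  · rw [← conv_tmul_one (fun y ↦ (hJ y).1), hconv, counit_tmul, Bialgebra.counit_one,
      one_smul]
  · rw [← conv_one_tmul (fun y ↦ (hJ y).2), hconv, counit_tmul, Bialgebra.counit_one,
      smul_eq_mul, mul_one]

variable (B : Subalgebra ℂ A)

theorem mulRightTwist_mapIncl_mem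
    (hB : ∀ b ∈ B, comul (R := ℂ) b ∈ range (mapIncl B.toSubmodule B.toSubmodule))
    (L : A ⊗[ℂ] A →ₗ[ℂ] ℂ) (w : B.toSubmodule ⊗[ℂ] B.toSubmodule) :
    mulRightTwist L (mapIncl B.toSubmodule B.toSubmodule w) ∈ B.toSubmodule := by
  induction w using TensorProduct.induction_on with
  | zero => simp
  | add x y hx hy => simpa using add_mem hx hy
  | tmul x y =>
    obtain ⟨s, hs⟩ := hB x x.2
    obtain ⟨t, ht⟩ := hB y y.2
    rw [map_tmul, mulRightTwist, comp_apply, comp_apply, comul_tmul, Submodule.subtype_apply,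
      Submodule.subtype_apply, ← hs, ← ht]
    exact mem_of_forall_tmul_tmul_mem (V := B.toSubmodule)
      ((TensorProduct.rid ℂ A).toLinearMap ∘ₗ map (mul' ℂ A) L ∘ₗ
        (tensorTensorTensorComm ℂ A A A A).toLinearMap ∘ₗ
        map (mapIncl B.toSubmodule B.toSubmodule) (mapIncl B.toSubmodule B.toSubmodule))
      (fun p q r s ↦ by simpa using B.toSubmodule.smul_mem _ (B.mul_mem p.2 r.2))
      (s ⊗ₜ t)

theorem twistMul_tmul_sub_mul_mem {K L : A ⊗[ℂ] A →ₗ[ℂ] ℂ} (hK : IsNormalized K)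
    (hL : IsNormalized L)
    (hB : ∀ b ∈ B, comul (R := ℂ) b ∈ range (mapIncl B.toSubmodule B.toSubmodule)) {a b : A}
    (ha : comul a - a ⊗ₜ 1 - 1 ⊗ₜ a ∈ range (mapIncl B.toSubmodule B.toSubmodule))
    (hb : comul b - b ⊗ₜ 1 - 1 ⊗ₜ b ∈ range (mapIncl B.toSubmodule B.toSubmodule)) :
    twistMul K L (a ⊗ₜ b) - a * b ∈ B.toSubmodule := by
  have h1 : (1 : A) ∈ B.toSubmodule := B.one_mem
  have hright : mulRightTwist L (a ⊗ₜ b) - a * b ∈ B.toSubmodule := by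
    simpa [mulRightTwist] using rid_map_comul_tmul_sub_mem hL B.mul'_mapIncl_mem
      (comul_sub_tmul_one_mem_range_rTensor h1 ha) (comul_sub_tmul_one_mem_range_rTensor h1 hb)
  have hleft : twistMul K L (a ⊗ₜ b) - mulRightTwist L (a ⊗ₜ b) ∈ B.toSubmodule := by
    rw [twistMul_eq_lid_comp_map_mulRightTwist]
    exact lid_map_comul_tmul_sub_mem hK (mulRightTwist_mapIncl_mem B hB L)
      (comul_sub_one_tmul_mem_range_lTensor h1 ha) (comul_sub_one_tmul_mem_range_lTensor h1 hb)
  simpa using add_mem hleft hright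

end Twist

/-- Let `A` be a commutative Hopf algebra over `ℂ`, `J` a Hopf 2-cocycle with convolution
inverse `Jinv`, and `B ⊆ A` a Hopf subalgebra with augmentation ideal `B⁺ = B ∩ ker ε`.
If `a, b ∈ A` satisfy `Δ(a) − a⊗1 − 1⊗a ∈ B⁺ ⊗ B⁺` and `Δ(b) − b⊗1 − 1⊗b ∈ B⁺ ⊗ B⁺`,
then the commutator `[a,b] = _J m_J(a⊗b) − _J m_J(b⊗a)` lies in `B⁺`. -/
theorem twistMul_commutator_mem_augmentation {A : Type} [CommRing A] [HopfAlgebra ℂ A]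
    (J Jinv : A ⊗[ℂ] A →ₗ[ℂ] ℂ) (hJ : IsHopf2Cocycle J Jinv)
    (B : Subalgebra ℂ A)
    (hB : ∀ b ∈ B, Coalgebra.comul (R := ℂ) b ∈
      LinearMap.range (TensorProduct.map (Subalgebra.toSubmodule B).subtype
        (Subalgebra.toSubmodule B).subtype))
    (Bplus : Submodule ℂ A)
    (hBplus : Bplus = Subalgebra.toSubmodule B ⊓
      LinearMap.ker (Coalgebra.counit (R := ℂ) (A := A)))
    (a b : A)
    (ha : Coalgebra.comul (R := ℂ) a - a ⊗ₜ[ℂ] (1 : A) - (1 : A) ⊗ₜ[ℂ] a ∈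
      LinearMap.range (TensorProduct.map Bplus.subtype Bplus.subtype))
    (hb : Coalgebra.comul (R := ℂ) b - b ⊗ₜ[ℂ] (1 : A) - (1 : A) ⊗ₜ[ℂ] b ∈
      LinearMap.range (TensorProduct.map Bplus.subtype Bplus.subtype)) :
    twistMul Jinv J (a ⊗ₜ[ℂ] b) - twistMul Jinv J (b ⊗ₜ[ℂ] a) ∈ Bplus := by
  obtain ⟨-, hconv, -, hJ1⟩ := hJ
  have hBplus_le : Bplus ≤ Subalgebra.toSubmodule B := hBplus ▸ inf_le_left
  have hle := range_mapIncl_mono hBplus_le hBplus_le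
  have hJinv1 := isNormalized_of_conv_eq_counit hJ1 hconv
  have hab := twistMul_tmul_sub_mul_mem B hJinv1 hJ1 hB (hle ha) (hle hb)
  have hba := twistMul_tmul_sub_mul_mem B hJinv1 hJ1 hB (hle hb) (hle ha)
  rw [hBplus]
  refine Submodule.mem_inf.2 ⟨by simpa [mul_comm b a] using sub_mem hab hba, mem_ker.2 ?_⟩
  rw [map_sub, counit_twistMul, counit_twistMul, hconv, counit_tmul, counit_tmul,
    smul_eq_mul, smul_eq_mul, mul_comm, sub_self]

end
end

section
/- Let A be a Hopf algebra over ℂ, J a Hopf 2-cocycle for A, and χ : A → ℂ an algebra homomorphism (a character). Then the map a ↦ Σ a₁ ⊗ χ(a₂) a₃, i.e., (id ⊗ ((χ ⊗ id)∘Δ)) ∘ Δ, is an injective algebra homomorphism from the twisted Hopf algebra _J A_J to the tensor product algebra _J A ⊗ A_J. -/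
open TensorProduct LinearMap

noncomputable section

/-!
Write `ψ a = Σ χ(a₁) a₂`, so that the map is `Φ = (id ⊗ ψ) ∘ Δ`. Because `χ` is a character, `ψ` is
multiplicative, and coassociativity gives `Δ ∘ ψ = (ψ ⊗ id) ∘ Δ`. Since `Δ` is multiplicative too,
`Φ (Σ J⁻¹(a₁,b₁) a₂b₂ J(a₃,b₃)) = Σ J⁻¹(a₁,b₁) a₂b₂ ⊗ ψ(a₃)ψ(b₃) J(a₄,b₄)`, and moving `ψ ⊗ ψ`
past the last coproduct turns the second leg into `m_J (ψ a₃ ⊗ ψ b₃)`: this is the product of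
`Φ a` and `Φ b` in `_J A ⊗ A_J`.

For injectivity, `a ↦ Σ χ(S a₁) a₂` is a left inverse of `ψ`, because in the convolution algebra
`χ * (χ ∘ S) = χ ∘ (id * S) = ε`; and `Δ` is split by the counit.
-/

theorem Coalgebra.comul_injective {R C : Type*} [CommSemiring R] [AddCommMonoid C] [Module R C]
    [Coalgebra R C] : Function.Injective (comul : C →ₗ[R] C ⊗[R] C) := by
  intro x y h
  simpa using congr(_root_.TensorProduct.rid R C (counit.lTensor C $h))

namespace LinearMap

open Coalgebra WithConv

section Coalgebra

variable {R C D M N : Type*} [CommSemiring R] [AddCommMonoid C] [Module R C] [Coalgebra R C]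
  [AddCommMonoid D] [Module R D] [Coalgebra R D]
  [AddCommMonoid M] [Module R M] [AddCommMonoid N] [Module R N]

def leftConv (F : C →ₗ[R] R) (G : C →ₗ[R] M) : C →ₗ[R] M :=
  (TensorProduct.lid R M).toLinearMap ∘ₗ map F G ∘ₗ comul

def rightConv (G : C →ₗ[R] M) (F : C →ₗ[R] R) : C →ₗ[R] M :=
  (TensorProduct.rid R M).toLinearMap ∘ₗ map G F ∘ₗ comul

lemma leftConv_apply_eq_sum {ι : Type*} (F : C →ₗ[R] R) (G : C →ₗ[R] M) {c : C}
    (𝓡 : Coalgebra.Repr R c ι) : leftConv F G c = ∑ i ∈ 𝓡.index, F (𝓡.left i) • G (𝓡.right i) := by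
  simp [leftConv, ← 𝓡.eq]

lemma comp_leftConv (f : M →ₗ[R] N) (F : C →ₗ[R] R) (G : C →ₗ[R] M) :
    f ∘ₗ leftConv F G = leftConv F (f ∘ₗ G) := by
  simp only [leftConv, coassoc_simps]

lemma comp_rightConv (f : M →ₗ[R] N) (G : C →ₗ[R] M) (F : C →ₗ[R] R) :
    f ∘ₗ rightConv G F = rightConv (f ∘ₗ G) F := by
  simp only [rightConv, coassoc_simps]

lemma leftConv_map_comp_comul (F : C →ₗ[R] R) (G : C →ₗ[R] M) (H : C →ₗ[R] N) :
    leftConv F (map G H ∘ₗ comul) = map (leftConv F G) H ∘ₗ comul := by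
  have h : (TensorProduct.lid R (M ⊗[R] N)).toLinearMap ∘ₗ map F (map G H) ∘ₗ
      (TensorProduct.assoc R C C C).toLinearMap =
      map ((TensorProduct.lid R M).toLinearMap ∘ₗ map F G) H := by
    ext; simp [TensorProduct.smul_tmul']
  calc leftConv F (map G H ∘ₗ comul)
      = (TensorProduct.lid R (M ⊗[R] N)).toLinearMap ∘ₗ map F (map G H) ∘ₗ
          (comul.lTensor C ∘ₗ comul) := by
        rw [leftConv, ← map_comp_lTensor]; rfl
    _ = ((TensorProduct.lid R (M ⊗[R] N)).toLinearMap ∘ₗ map F (map G H) ∘ₗ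
          (TensorProduct.assoc R C C C).toLinearMap) ∘ₗ (comul.rTensor C ∘ₗ comul) := by
        rw [← coassoc]; rfl
    _ = map (leftConv F G) H ∘ₗ comul := by
        rw [h, ← comp_assoc, map_comp_rTensor]; rfl

lemma map_comp_comul_rightConv (G : C →ₗ[R] M) (H : C →ₗ[R] N) (F : C →ₗ[R] R) :
    rightConv (map G H ∘ₗ comul) F = map G (rightConv H F) ∘ₗ comul := by
  have h : (TensorProduct.rid R (M ⊗[R] N)).toLinearMap ∘ₗ map (map G H) F ∘ₗ
      (TensorProduct.assoc R C C C).symm.toLinearMap =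
      map G ((TensorProduct.rid R N).toLinearMap ∘ₗ map H F) := by
    ext; simp
  calc rightConv (map G H ∘ₗ comul) F
      = (TensorProduct.rid R (M ⊗[R] N)).toLinearMap ∘ₗ map (map G H) F ∘ₗ
          (comul.rTensor C ∘ₗ comul) := by
        rw [rightConv, ← map_comp_rTensor]; rfl
    _ = ((TensorProduct.rid R (M ⊗[R] N)).toLinearMap ∘ₗ map (map G H) F ∘ₗ
          (TensorProduct.assoc R C C C).symm.toLinearMap) ∘ₗ (comul.lTensor C ∘ₗ comul) := by
        rw [← coassoc_symm]; rfl
    _ = map G (rightConv H F) ∘ₗ comul := by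
        rw [h, ← comp_assoc, map_comp_lTensor]; rfl

lemma leftConv_eq_convMul (F F' : C →ₗ[R] R) :
    leftConv F F' = (toConv F * toConv F').ofConv := by
  have h : (TensorProduct.lid R R).toLinearMap = mul' R R := by ext; simp
  rw [leftConv, h]; rfl

lemma leftConv_leftConv (F F' : C →ₗ[R] R) (G : C →ₗ[R] M) :
    leftConv F (leftConv F' G) = leftConv (toConv F * toConv F').ofConv G := by
  calc leftConv F (leftConv F' G)
      = (TensorProduct.lid R M).toLinearMap ∘ₗ leftConv F (map F' G ∘ₗ comul) := by
        rw [comp_leftConv]; rfl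
    _ = leftConv (toConv F * toConv F').ofConv G := by
        rw [leftConv_map_comp_comul, leftConv_eq_convMul]; rfl

lemma leftConv_one (G : C →ₗ[R] M) : leftConv (1 : WithConv (C →ₗ[R] R)).ofConv G = G := by
  simp only [convOne_def, ofConv_toConv, Algebra.linearMap_self, id_comp, leftConv,
    CoassocSimps.map_counit_comp_comul_left, coassoc_simps]

lemma comul_comp_leftConv_id (F : C →ₗ[R] R) :
    comul ∘ₗ leftConv F id = map (leftConv F id) id ∘ₗ comul := by
  rw [comp_leftConv, comp_id, ← leftConv_map_comp_comul, map_id, id_comp]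

lemma rightConv_comp (G : C →ₗ[R] M) (F : C →ₗ[R] R) {T : C →ₗ[R] C}
    (hT : comul ∘ₗ T = map T id ∘ₗ comul) :
    rightConv G F ∘ₗ T = rightConv (G ∘ₗ T) F := by
  rw [rightConv, rightConv, comp_assoc, comp_assoc, hT, ← comp_assoc comul, ← map_comp, comp_id]

lemma comul_comp_map {S : C →ₗ[R] C} {T : D →ₗ[R] D}
    (hS : comul ∘ₗ S = map S id ∘ₗ comul) (hT : comul ∘ₗ T = map T id ∘ₗ comul) :
    comul ∘ₗ map S T = map (map S T) id ∘ₗ comul := by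
  simp only [TensorProduct.comul_def, AlgebraTensorModule.map_eq,
    AlgebraTensorModule.tensorTensorTensorComm_eq]
  rw [comp_assoc, ← map_comp, hS, hT, map_comp, ← comp_assoc, tensorTensorTensorComm_comp_map,
    map_id, comp_assoc]

lemma tensorTensorTensorComm_comp_map_lTensor_comp_comul (S : C →ₗ[R] M) (T : D →ₗ[R] N) :
    (tensorTensorTensorComm R C M D N).toLinearMap ∘ₗ
        map (lTensor C S ∘ₗ comul) (lTensor D T ∘ₗ comul) =
      lTensor (C ⊗[R] D) (map S T) ∘ₗ comul := by
  rw [map_comp, ← comp_assoc, lTensor, lTensor, tensorTensorTensorComm_comp_map, map_id,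
    comp_assoc]
  simp only [TensorProduct.comul_def, AlgebraTensorModule.map_eq,
    AlgebraTensorModule.tensorTensorTensorComm_eq]
  rfl

end Coalgebra

section Bialgebra

variable {R A : Type*} [CommSemiring R] [Semiring A] [Bialgebra R A]

lemma comul_comp_mul' : comul ∘ₗ mul' R A = map (mul' R A) (mul' R A) ∘ₗ comul :=
  (Bialgebra.mulCoalgHom R A).map_comp_comul.symm

lemma leftConv_id_mul (χ : A →ₐ[R] R) (a b : A) :
    leftConv χ.toLinearMap id (a * b) =
      leftConv χ.toLinearMap id a * leftConv χ.toLinearMap id b := by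
  rw [leftConv_apply_eq_sum _ _ ((ℛ R a).mul (ℛ R b)), leftConv_apply_eq_sum _ _ (ℛ R a),
    leftConv_apply_eq_sum _ _ (ℛ R b), Finset.sum_mul_sum, Coalgebra.Repr.mul_index,
    Finset.sum_product]
  simp [smul_smul, mul_comm]

end Bialgebra

section HopfAlgebra

variable {R A : Type*} [CommSemiring R] [Semiring A] [HopfAlgebra R A]

lemma leftConv_id_leftInverse (χ : A →ₐ[R] R) :
    Function.LeftInverse (leftConv (χ.toLinearMap ∘ₗ HopfAlgebra.antipode R) id)
      (leftConv χ.toLinearMap id) := by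
  have hconv : toConv χ.toLinearMap * toConv (χ.toLinearMap ∘ₗ HopfAlgebra.antipode R) = 1 :=
    calc toConv χ.toLinearMap * toConv (χ.toLinearMap ∘ₗ HopfAlgebra.antipode R)
        = toConv (χ.toLinearMap ∘ₗ
            (toConv id * toConv (HopfAlgebra.antipode R (A := A))).ofConv) := by
          rw [algHom_comp_convMul_distrib]; rfl
      _ = 1 := by
          rw [id_mul_antipode]; ext; simp
  intro a
  rw [← comp_apply, comp_leftConv, comp_id, leftConv_leftConv, hconv, leftConv_one, id_apply]

end HopfAlgebra

end LinearMap

section TwistedMultiplication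

open Coalgebra LinearMap

variable {A : Type} [Ring A] [Bialgebra ℂ A]

lemma twistMul_eq_leftConv_rightConv (Kinv J : A ⊗[ℂ] A →ₗ[ℂ] ℂ) :
    twistMul Kinv J = leftConv Kinv (rightConv (mul' ℂ A) J) := by
  simp only [twistMul, leftConv, rightConv, coassoc_simps]

lemma lTensor_comp_comul_comp_twistMul (ψ : A →ₗ[ℂ] A) (hmul : ∀ a b, ψ (a * b) = ψ a * ψ b)
    (hcomul : comul ∘ₗ ψ = map ψ id ∘ₗ comul) (Kinv J : A ⊗[ℂ] A →ₗ[ℂ] ℂ) :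
    (lTensor A ψ ∘ₗ comul) ∘ₗ twistMul Kinv J =
      map (mulLeftTwist Kinv) (mulRightTwist J) ∘ₗ
        (tensorTensorTensorComm ℂ A A A A).toLinearMap ∘ₗ
        map (lTensor A ψ ∘ₗ comul) (lTensor A ψ ∘ₗ comul) := by
  have hψμ : ψ ∘ₗ mul' ℂ A = mul' ℂ A ∘ₗ map ψ ψ := by ext; simp [hmul]
  have hΦμ : (lTensor A ψ ∘ₗ comul) ∘ₗ mul' ℂ A =
      map (mul' ℂ A) (mul' ℂ A ∘ₗ map ψ ψ) ∘ₗ comul := by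
    rw [comp_assoc, comul_comp_mul', ← comp_assoc, lTensor, ← map_comp, hψμ, id_comp]
  show _ = map (leftConv Kinv (mul' ℂ A)) (rightConv (mul' ℂ A) J) ∘ₗ _
  calc (lTensor A ψ ∘ₗ comul) ∘ₗ twistMul Kinv J
      = leftConv Kinv (rightConv ((lTensor A ψ ∘ₗ comul) ∘ₗ mul' ℂ A) J) := by
        rw [twistMul_eq_leftConv_rightConv, comp_leftConv, comp_rightConv]
    _ = map (leftConv Kinv (mul' ℂ A)) (rightConv (mul' ℂ A) J ∘ₗ map ψ ψ) ∘ₗ comul := by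
        rw [hΦμ, map_comp_comul_rightConv, leftConv_map_comp_comul,
          rightConv_comp _ _ (comul_comp_map hcomul hcomul)]
    _ = _ := by
        rw [tensorTensorTensorComm_comp_map_lTensor_comp_comul, lTensor, ← comp_assoc, ← map_comp,
          comp_id]

end TwistedMultiplication

theorem twisted_comul_translation_injective_algHom_general {A : Type} [Ring A] [HopfAlgebra ℂ A]
    (J Jinv : A ⊗[ℂ] A →ₗ[ℂ] ℂ)
    (χ : A →ₐ[ℂ] ℂ)
    (Φ : A →ₗ[ℂ] A ⊗[ℂ] A)
    (hΦ : Φ = LinearMap.lTensor A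
        ((TensorProduct.lid ℂ A).toLinearMap ∘ₗ
          TensorProduct.map χ.toLinearMap LinearMap.id ∘ₗ Coalgebra.comul) ∘ₗ
      Coalgebra.comul) :
    Function.Injective Φ ∧
    ∀ a b : A,
      Φ (twistMul Jinv J (a ⊗ₜ[ℂ] b)) =
        TensorProduct.map (mulLeftTwist Jinv) (mulRightTwist J)
          (TensorProduct.tensorTensorTensorComm ℂ A A A A (Φ a ⊗ₜ[ℂ] Φ b)) := by
  change Φ = lTensor A (leftConv χ.toLinearMap LinearMap.id) ∘ₗ Coalgebra.comul at hΦ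
  subst hΦ
  refine ⟨?_, fun a b => ?_⟩
  · exact (Module.Flat.lTensor_preserves_injective_linearMap _
      (leftConv_id_leftInverse χ).injective).comp Coalgebra.comul_injective
  · exact congr($(lTensor_comp_comul_comp_twistMul _ (leftConv_id_mul χ)
      (comul_comp_leftConv_id _) Jinv J) (a ⊗ₜ b))

/-- Let `A` be a Hopf algebra over `ℂ`, `J` a Hopf 2-cocycle with convolution inverse
`Jinv`, and `χ : A → ℂ` a character. Then the map `a ↦ Σ a₁ ⊗ χ(a₂) a₃`, i.e.,
`(id ⊗ ((χ ⊗ id)∘Δ)) ∘ Δ`, is an injective algebra homomorphism from `_J A_J` to the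
tensor product algebra `_J A ⊗ A_J`. -/
theorem twisted_comul_translation_injective_algHom {A : Type} [Ring A] [HopfAlgebra ℂ A]
    (J Jinv : A ⊗[ℂ] A →ₗ[ℂ] ℂ) (hJ : IsHopf2Cocycle J Jinv)
    (χ : A →ₐ[ℂ] ℂ)
    (Φ : A →ₗ[ℂ] A ⊗[ℂ] A)
    (hΦ : Φ = LinearMap.lTensor A
        ((TensorProduct.lid ℂ A).toLinearMap ∘ₗ
          TensorProduct.map χ.toLinearMap LinearMap.id ∘ₗ Coalgebra.comul) ∘ₗ
      Coalgebra.comul) :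
    Function.Injective Φ ∧
    ∀ a b : A,
      Φ (twistMul Jinv J (a ⊗ₜ[ℂ] b)) =
        TensorProduct.map (mulLeftTwist Jinv) (mulRightTwist J)
          (TensorProduct.tensorTensorTensorComm ℂ A A A A (Φ a ⊗ₜ[ℂ] Φ b)) :=
  twisted_comul_translation_injective_algHom_general J Jinv χ Φ hΦ
end
end
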